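/- arXiv:1806.07614 — 5 statements merged into one kernel-verified Lean document; each statement's English description precedes it below -/
import Mathlib

section
/- Let S be a semigroup, (I[s])_{s∈S} a family of sets, and for each (a,b)∈S² maps λ[a,b]: I[ab]→I[a] and ρ[a,b]: I[ab]→I[b] satisfying (α) λ[a,b]∘λ[ab,c] = λ[a,bc], (β) ρ[b,c]∘ρ[a,bc] = ρ[ab,c], and (γ) ρ[a,b]∘λ[ab,c] = λ[b,c]∘ρ[a,bc] for all a,b,c∈S. Then for any semigroup H, the operation (x,a)⋆(y,b) = ((x∘λ[a,b])·(y∘ρ[a,b]), ab) on the disjoint union ⨄_{a∈S} H^{I[a]} is associative. -/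
universe u v w

/-- The multiplication of the λρ-product `H^[𝒮]` on the disjoint union `⨄_{a∈S} H^{I[a]}`. -/
def lrMul {S : Type u} [Mul S] (I : S → Type v) (lam : ∀ a b : S, I (a * b) → I a)
    (rho : ∀ a b : S, I (a * b) → I b) (H : Type w) [Mul H]
    (p q : Σ a : S, I a → H) : Σ a : S, I a → H :=
  ⟨p.1 * q.1, fun i => p.2 (lam p.1 q.1 i) * q.2 (rho p.1 q.1 i)⟩

theorem stmt0 {S : Type u} [Semigroup S] (I : S → Type v)
    (lam : ∀ a b : S, I (a * b) → I a) (rho : ∀ a b : S, I (a * b) → I b)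
    (alpha : ∀ (a b c : S) (x : I (a * b * c)),
      lam a b (lam (a * b) c x) = lam a (b * c) (cast (congrArg I (mul_assoc a b c)) x))
    (beta : ∀ (a b c : S) (x : I (a * b * c)),
      rho b c (rho a (b * c) (cast (congrArg I (mul_assoc a b c)) x)) = rho (a * b) c x)
    (gamma : ∀ (a b c : S) (x : I (a * b * c)),
      rho a b (lam (a * b) c x) = lam b c (rho a (b * c) (cast (congrArg I (mul_assoc a b c)) x)))
    (H : Type w) [Semigroup H] :
    ∀ p q r : Σ a : S, I a → H,
      lrMul I lam rho H (lrMul I lam rho H p q) r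
        = lrMul I lam rho H p (lrMul I lam rho H q r) := by
  rintro ⟨a, x⟩ ⟨b, y⟩ ⟨c, z⟩
  refine Sigma.ext (mul_assoc a b c) ?_
  simp only [lrMul]
  refine Function.hfunext (congrArg I (mul_assoc a b c)) ?_
  intro i j hij
  have hj : j = cast (congrArg I (mul_assoc a b c)) i :=
    eq_of_heq (hij.symm.trans (cast_heq _ i).symm)
  subst hj
  rw [alpha, gamma, ← beta a b c i, mul_assoc]
end

section
/- Let 𝒮 and 𝒮' be λρ-systems over semigroups S and S' respectively, and let (t, h) be a transformation from 𝒮' to 𝒮: h: S→S' is a semigroup homomorphism and t[a]: I'[h(a)]→I[a] (for a∈S) satisfies λ[a,b]∘t[ab] = t[a]∘λ'[h(a),h(b)] and ρ[a,b]∘t[ab] = t[b]∘ρ'[h(a),h(b)] (as maps I'[h(ab)]→I[a], resp. I'[h(ab)]→I[b]). Then for any semigroup H, the map H^t: H^{[𝒮]}→H^{[𝒮']} defined by (x,a) ↦ (x∘t[a], h(a)) is a semigroup homomorphism. -/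
universe u u' v v' w

lemma cast_app {α : Sort u} {β : α → Sort v} {γ : Sort w} {a b : α} (e : a = b)
    (f : β a → γ) (v : β b) :
    cast (congrArg (fun x => β x → γ) e) f v = f (cast (congrArg β e.symm) v) := by
  subst e; rfl

/-- A transformation `(t, h) : 𝒮' → 𝒮` of λρ-systems induces, for every semigroup `H`,
a semigroup homomorphism `H^t : H^[𝒮] → H^[𝒮']`, `(x, a) ↦ (x ∘ t[a], h(a))`. -/
theorem stmt16 {S : Type u} {S' : Type u'} [Semigroup S] [Semigroup S']
    (I : S → Type v) (lam : ∀ a b : S, I (a * b) → I a) (rho : ∀ a b : S, I (a * b) → I b)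
    (alpha : ∀ (a b c : S) (x : I (a * b * c)),
      lam a b (lam (a * b) c x) = lam a (b * c) (cast (congrArg I (mul_assoc a b c)) x))
    (beta : ∀ (a b c : S) (x : I (a * b * c)),
      rho b c (rho a (b * c) (cast (congrArg I (mul_assoc a b c)) x)) = rho (a * b) c x)
    (gamma : ∀ (a b c : S) (x : I (a * b * c)),
      rho a b (lam (a * b) c x) = lam b c (rho a (b * c) (cast (congrArg I (mul_assoc a b c)) x)))
    (I' : S' → Type v')
    (lam' : ∀ a b : S', I' (a * b) → I' a) (rho' : ∀ a b : S', I' (a * b) → I' b)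
    (alpha' : ∀ (a b c : S') (x : I' (a * b * c)),
      lam' a b (lam' (a * b) c x) = lam' a (b * c) (cast (congrArg I' (mul_assoc a b c)) x))
    (beta' : ∀ (a b c : S') (x : I' (a * b * c)),
      rho' b c (rho' a (b * c) (cast (congrArg I' (mul_assoc a b c)) x)) = rho' (a * b) c x)
    (gamma' : ∀ (a b c : S') (x : I' (a * b * c)),
      rho' a b (lam' (a * b) c x)
        = lam' b c (rho' a (b * c) (cast (congrArg I' (mul_assoc a b c)) x)))
    (h : S →ₙ* S') (t : ∀ a : S, I' (h a) → I a)
    (ht1 : ∀ (a b : S) (v : I' (h (a * b))),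
      lam a b (t (a * b) v)
        = t a (lam' (h a) (h b) (cast (congrArg I' (map_mul h a b)) v)))
    (ht2 : ∀ (a b : S) (v : I' (h (a * b))),
      rho a b (t (a * b) v)
        = t b (rho' (h a) (h b) (cast (congrArg I' (map_mul h a b)) v)))
    (H : Type w) [Semigroup H] :
    ∀ p q : Σ a : S, I a → H,
      (fun p : Σ a : S, I a → H => (⟨h p.1, p.2 ∘ t p.1⟩ : Σ a' : S', I' a' → H))
          (lrMul I lam rho H p q)
        = lrMul I' lam' rho' H
            (⟨h p.1, p.2 ∘ t p.1⟩ : Σ a' : S', I' a' → H)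
            (⟨h q.1, q.2 ∘ t q.1⟩ : Σ a' : S', I' a' → H) := by
  intro p q
  obtain ⟨a, x⟩ := p
  obtain ⟨b, y⟩ := q
  have e : h (a * b) = h a * h b := map_mul h a b
  refine Sigma.ext e ?_
  refine heq_of_cast_eq (congrArg (fun s => I' s → H) e) ?_
  funext v
  change I' (h a * h b) at v
  refine (cast_app (β := I') (γ := H) e _ v).trans ?_
  show x (lam a b (t (a * b) _)) * y (rho a b (t (a * b) _))
      = x (t a (lam' (h a) (h b) v)) * y (t b (rho' (h a) (h b) v))
  rw [ht1, ht2, cast_cast, cast_eq]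
end

section
/- Let 𝒮 = (G, I, λ, ρ) be a λρ-system over a group G that is unital (λ[x,e] = id_{I[x]} and ρ[e,x] = id_{I[x]} for all x∈G, where e is the unit). Then for all x,y∈G the maps λ[x,y]: I[xy]→I[x] and ρ[x,y]: I[xy]→I[y] are bijections. -/
private lemma lam_heq' {G : Type*} [Group G] {I : G → Type*}
    (lam : ∀ a b : G, I (a * b) → I a) {a a' b b' : G} (ha : a = a') (hb : b = b')
    {w : I (a * b)} {w' : I (a' * b')} (hw : HEq w w') :
    HEq (lam a b w) (lam a' b' w') := by
  subst ha; subst hb; cases hw; rfl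

private lemma rho_heq' {G : Type*} [Group G] {I : G → Type*}
    (rho : ∀ a b : G, I (a * b) → I b) {a a' b b' : G} (ha : a = a') (hb : b = b')
    {w : I (a * b)} {w' : I (a' * b')} (hw : HEq w w') :
    HEq (rho a b w) (rho a' b' w') := by
  subst ha; subst hb; cases hw; rfl

private lemma cast_eq_cast' {α β γ : Sort u} (h1 : α = β) (h2 : γ = β) (v : α) (w : γ)
    (hw : HEq v w) : cast h1 v = cast h2 w :=
  eq_of_heq (((cast_heq _ _).trans hw).trans (cast_heq _ _).symm)

/-- In a unital λρ-system over a group `G`, all the maps `λ[x,y] : I[xy] → I[x]` and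
`ρ[x,y] : I[xy] → I[y]` are bijections. -/
theorem stmt17 {G : Type*} [Group G] (I : G → Type*)
    (lam : ∀ a b : G, I (a * b) → I a) (rho : ∀ a b : G, I (a * b) → I b)
    (alpha : ∀ (a b c : G) (x : I (a * b * c)),
      lam a b (lam (a * b) c x) = lam a (b * c) (cast (congrArg I (mul_assoc a b c)) x))
    (beta : ∀ (a b c : G) (x : I (a * b * c)),
      rho b c (rho a (b * c) (cast (congrArg I (mul_assoc a b c)) x)) = rho (a * b) c x)
    (gamma : ∀ (a b c : G) (x : I (a * b * c)),
      rho a b (lam (a * b) c x) = lam b c (rho a (b * c) (cast (congrArg I (mul_assoc a b c)) x)))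
    (hlam : ∀ (x : G) (v : I (x * 1)), lam x 1 v = cast (congrArg I (mul_one x)) v)
    (hrho : ∀ (x : G) (v : I (1 * x)), rho 1 x v = cast (congrArg I (one_mul x)) v) :
    ∀ x y : G, Function.Bijective (lam x y) ∧ Function.Bijective (rho x y) := by
  intro x y
  constructor
  · -- lam x y is bijective, with inverse g
    have h1 : I x = I (x * y * y⁻¹) := congrArg I (mul_inv_cancel_right x y).symm
    set g : I x → I (x * y) := fun v => lam (x * y) y⁻¹ (cast h1 v) with hg
    have hleft : ∀ u : I (x * y), g (lam x y u) = u := by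
      intro u
      have h3 : I (x * y) = I (x * y * y⁻¹ * y) :=
        congrArg I (by group)
      have step1 : cast h1 (lam x y u) = lam (x * y * y⁻¹) y (cast h3 u) := by
        refine eq_of_heq ((cast_heq _ _).trans ?_)
        exact lam_heq' lam (mul_inv_cancel_right x y).symm rfl (cast_heq h3 u).symm
      have step2 := alpha (x * y) y⁻¹ y (cast h3 u)
      rw [hg]
      simp only [step1, step2]
      refine eq_of_heq ?_
      refine HEq.trans (lam_heq' lam rfl (inv_mul_cancel y)
        (b' := (1:G)) (w' := cast (congrArg I (by group) :
          I (x * y) = I (x * y * 1)) u) ?_) ?_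
      · exact (((cast_heq _ _).trans (cast_heq _ _)).trans (cast_heq _ _).symm)
      · rw [hlam]
        exact (cast_heq _ _).trans (cast_heq _ _)
    have hright : ∀ v : I x, lam x y (g v) = v := by
      intro v
      rw [hg]
      simp only
      rw [alpha x y y⁻¹ (cast h1 v)]
      refine eq_of_heq ?_
      refine HEq.trans (lam_heq' lam rfl (mul_inv_cancel y)
        (b' := (1:G)) (w' := cast (congrArg I (by group) :
          I x = I (x * 1)) v) ?_) ?_
      · exact (((cast_heq _ _).trans (cast_heq _ _)).trans (cast_heq _ _).symm)
      · rw [hlam]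
        exact (cast_heq _ _).trans (cast_heq _ _)
    exact ⟨Function.LeftInverse.injective hleft, Function.RightInverse.surjective hright⟩
  · -- rho x y is bijective, with inverse g
    have h1 : I y = I (x⁻¹ * (x * y)) := congrArg I (inv_mul_cancel_left x y).symm
    set g : I y → I (x * y) := fun v => rho x⁻¹ (x * y) (cast h1 v) with hg
    have hleft : ∀ u : I (x * y), g (rho x y u) = u := by
      intro u
      have h4 : I (x * y) = I (x * (x⁻¹ * (x * y))) :=
        congrArg I (by group)
      have step1 : cast h1 (rho x y u) = rho x (x⁻¹ * (x * y)) (cast h4 u) := by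
        refine eq_of_heq ((cast_heq _ _).trans ?_)
        exact rho_heq' rho rfl (inv_mul_cancel_left x y).symm (cast_heq h4 u).symm
      have h5 : I (x * y) = I (x * x⁻¹ * (x * y)) :=
        congrArg I (by group)
      have step2 : cast h4 u = cast (congrArg I (mul_assoc x x⁻¹ (x * y))) (cast h5 u) :=
        cast_eq_cast' _ _ _ _ (cast_heq _ _).symm
      rw [hg]
      simp only [step1, step2, beta x x⁻¹ (x * y) (cast h5 u)]
      refine eq_of_heq ?_
      refine HEq.trans (rho_heq' rho (mul_inv_cancel x)
        (a' := (1:G)) rfl (w' := cast (congrArg I (by group) :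
          I (x * y) = I (1 * (x * y))) u) ?_) ?_
      · refine (cast_heq _ _).trans ?_
        exact (cast_heq _ _).symm
      · rw [hrho]
        exact (cast_heq _ _).trans (cast_heq _ _)
    have hright : ∀ v : I y, rho x y (g v) = v := by
      intro v
      have h5 : I y = I (x⁻¹ * x * y) := congrArg I (by group)
      have step2 : cast h1 v = cast (congrArg I (mul_assoc x⁻¹ x y)) (cast h5 v) :=
        cast_eq_cast' _ _ _ _ (cast_heq _ _).symm
      rw [hg]
      simp only [step2, beta x⁻¹ x y (cast h5 v)]
      refine eq_of_heq ?_
      refine HEq.trans (rho_heq' rho (inv_mul_cancel x)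
        (a' := (1:G)) rfl (w' := cast (congrArg I (by group) :
          I y = I (1 * y)) v) ?_) ?_
      · refine (cast_heq _ _).trans ?_
        exact (cast_heq _ _).symm
      · rw [hrho]
        exact (cast_heq _ _).trans (cast_heq _ _)
    exact ⟨Function.LeftInverse.injective hleft, Function.RightInverse.surjective hright⟩
end

section
/- Let 𝒮 = (G, I, λ, ρ) be a unital λρ-system over a group G with unit e. Define, for i∈I[e] and x∈G, i·x = (ρ[x,e]∘λ[e,x]⁻¹)(i), where λ[e,x]: I[x]→I[e] is a bijection. Then this is a right group action of G on I[e]: i·e = i and (i·x)·y = i·(xy) for all i∈I[e], x,y∈G. -/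
theorem stmt18_lamCongr {G : Type*} [Mul G] (I : G → Type*) (lam : ∀ a b : G, I (a * b) → I a)
    {a a' b b' : G} (ha : a = a') (hb : b = b') {u : I (a * b)} {u' : I (a' * b')}
    (hu : HEq u u') : HEq (lam a b u) (lam a' b' u') := by
  subst ha; subst hb; cases hu; rfl

theorem stmt18_rhoCongr {G : Type*} [Mul G] (I : G → Type*) (rho : ∀ a b : G, I (a * b) → I b)
    {a a' b b' : G} (ha : a = a') (hb : b = b') {u : I (a * b)} {u' : I (a' * b')}
    (hu : HEq u u') : HEq (rho a b u) (rho a' b' u') := by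
  subst ha; subst hb; cases hu; rfl

/-- For a unital λρ-system over a group `G`, the operation
`i · x = (ρ[x,e] ∘ λ[e,x]⁻¹)(i)` is a right action of `G` on `I[e]`:
`i·e = i` and `(i·x)·y = i·(xy)`. The action is characterized by
`(λ[e,x] j) · x = ρ[x,e] j` (which determines it, since `λ[e,x]` is a bijection). -/
theorem stmt18 {G : Type*} [Group G] (I : G → Type*)
    (lam : ∀ a b : G, I (a * b) → I a) (rho : ∀ a b : G, I (a * b) → I b)
    (alpha : ∀ (a b c : G) (x : I (a * b * c)),
      lam a b (lam (a * b) c x) = lam a (b * c) (cast (congrArg I (mul_assoc a b c)) x))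
    (beta : ∀ (a b c : G) (x : I (a * b * c)),
      rho b c (rho a (b * c) (cast (congrArg I (mul_assoc a b c)) x)) = rho (a * b) c x)
    (gamma : ∀ (a b c : G) (x : I (a * b * c)),
      rho a b (lam (a * b) c x) = lam b c (rho a (b * c) (cast (congrArg I (mul_assoc a b c)) x)))
    (hlam : ∀ (x : G) (v : I (x * 1)), lam x 1 v = cast (congrArg I (mul_one x)) v)
    (hrho : ∀ (x : G) (v : I (1 * x)), rho 1 x v = cast (congrArg I (one_mul x)) v)
    (act : I (1 : G) → G → I (1 : G))
    (hact : ∀ (x : G) (j : I ((1 : G) * x)),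
      act (lam 1 x j) x
        = rho x 1 (cast (congrArg I ((one_mul x).trans (mul_one x).symm)) j)) :
    (∀ i : I (1 : G), act i 1 = i) ∧
    (∀ (i : I (1 : G)) (x y : G), act (act i x) y = act i (x * y)) := by
  -- surjectivity of lam a b
  have surj : ∀ (a b : G) (t : I a), ∃ v : I (a * b), lam a b v = t := by
    intro a b t
    have hc : a = a * b * b⁻¹ := by group
    refine ⟨lam (a * b) b⁻¹ (cast (congrArg I hc) t), ?_⟩
    rw [alpha a b b⁻¹]
    apply eq_of_heq
    refine HEq.trans (stmt18_lamCongr I lam rfl (by group : b * b⁻¹ = 1)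
      (b := b * b⁻¹)
      (u' := cast (congrArg I (by group : a * (b * b⁻¹) = a * 1)) (cast (congrArg I (mul_assoc a b b⁻¹)) (cast (congrArg I hc) t)))
      (cast_heq _ _).symm) ?_
    rw [hlam a]
    exact (cast_heq _ _).trans ((cast_heq _ _).trans ((cast_heq _ _).trans (cast_heq _ _)))
  constructor
  · -- act i 1 = i
    intro i
    have hj : lam 1 1 (cast (congrArg I (mul_one (1 : G)).symm) i) = i := by
      rw [hlam 1]
      exact eq_of_heq ((cast_heq _ _).trans (cast_heq _ _))
    calc act i 1 = act (lam 1 1 (cast (congrArg I (mul_one (1 : G)).symm) i)) 1 := by rw [hj]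
      _ = rho 1 1 (cast _ (cast (congrArg I (mul_one (1 : G)).symm) i)) := hact 1 _
      _ = i := by
          rw [hrho 1]
          exact eq_of_heq ((cast_heq _ _).trans ((cast_heq _ _).trans (cast_heq _ _)))
  · intro i x y
    obtain ⟨j, hj⟩ := surj 1 x i
    obtain ⟨w, hw⟩ := surj (1 * x) y j
    -- v : I (x * 1 * y)
    set v : I (x * 1 * y) := cast (congrArg I (by group : (1 : G) * x * y = x * 1 * y)) w with hv_def
    have hv : lam (x * 1) y v = cast (congrArg I ((one_mul x).trans (mul_one x).symm)) j := by
      apply eq_of_heq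
      refine HEq.trans (stmt18_lamCongr I lam (by group : x * 1 = 1 * x) rfl
        ((cast_heq _ _ : HEq v w))) ?_
      rw [hw]
      exact (cast_heq _ _).symm
    have key1 : act i x = lam 1 y (rho x (1 * y) (cast (congrArg I (mul_assoc x 1 y)) v)) := by
      rw [← hj, hact x j, ← hv]
      exact gamma x 1 y v
    set k : I ((1 : G) * y) := rho x (1 * y) (cast (congrArg I (mul_assoc x 1 y)) v) with hk_def
    have lhs : act (act i x) y = rho y 1 (cast (congrArg I ((one_mul y).trans (mul_one y).symm)) k) := by
      rw [key1]; exact hact y k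
    -- right-hand side
    set m : I ((1 : G) * (x * y)) := cast (congrArg I (mul_assoc 1 x y)) w with hm_def
    have hm : lam 1 (x * y) m = i := by
      rw [hm_def, ← alpha 1 x y w, hw, hj]
    have rhs : act i (x * y)
        = rho (x * y) 1 (cast (congrArg I ((one_mul (x * y)).trans (mul_one (x * y)).symm)) m) := by
      rw [← hm]; exact hact (x * y) m
    rw [lhs, rhs]
    -- now apply beta
    set u : I (x * y * 1) := cast (congrArg I (by group : (1 : G) * x * y = x * y * 1)) w with hu_def
    have hb := beta x y 1 u
    have e1 : cast (congrArg I ((one_mul y).trans (mul_one y).symm)) k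
        = rho x (y * 1) (cast (congrArg I (mul_assoc x y 1)) u) := by
      apply eq_of_heq
      refine HEq.trans (cast_heq _ _) ?_
      rw [hk_def]
      exact stmt18_rhoCongr I rho rfl (by group : (1 : G) * y = y * 1)
        ((cast_heq _ _).trans ((cast_heq _ _).trans ((cast_heq _ _).symm.trans (cast_heq _ _).symm)))
    have e2 : rho (x * y) 1 u
        = rho (x * y) 1 (cast (congrArg I ((one_mul (x * y)).trans (mul_one (x * y)).symm)) m) := by
      congr 1
      apply eq_of_heq
      refine HEq.trans (cast_heq _ _) ?_
      exact ((cast_heq _ _).trans (cast_heq _ _)).symm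
    rw [e1, hb, e2]
end

section
/- Let G be a group acting on a set X on the right, let 𝒮(X,G) be the λρ-system over G with I[g] = X, λ[a,b] = id_X, ρ[a,b] = (–·a), and let H be a group. Then the λρ-product H^{[𝒮(X,G)]} is a group, isomorphic to the wreath product H ≀ (X,G) = (H^X × G, *) where (a,x)*(b,y) = (a·(b∘(–·x)), xy). -/
universe u v w

/-- The multiplication of the λρ-product `H^[𝒮(X,G)]` for the λρ-system induced by a
right action of `G` on `X` (`I[g] = X`, `λ[a,b] = id`, `ρ[a,b] = (–·a)`). -/
def lrActMul {G : Type u} [Group G] {X : Type v} (act : X → G → X)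
    (H : Type w) [Group H] (p q : Σ _g : G, X → H) : Σ _g : G, X → H :=
  ⟨p.1 * q.1, fun i => p.2 (id i) * q.2 (act i p.1)⟩

/-- The multiplication of the wreath product `H ≀ (X,G)` on `H^X × G`:
`(a,x)*(b,y) = (a·(b∘(–·x)), xy)`. -/
def wrMul {G : Type u} [Group G] {X : Type v} (act : X → G → X)
    (H : Type w) [Group H] (p q : (X → H) × G) : (X → H) × G :=
  (fun i => p.1 i * q.1 (act i p.2), p.2 * q.2)

/-- For a group `G` acting on `X` on the right and a group `H`, the λρ-product
`H^[𝒮(X,G)]` is a group, isomorphic to the wreath product `H ≀ (X,G)`. -/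
theorem stmt19 {G : Type u} [Group G] {X : Type v} (act : X → G → X)
    (h1 : ∀ x : X, act x 1 = x)
    (h2 : ∀ (x : X) (a b : G), act (act x a) b = act x (a * b))
    (H : Type w) [Group H] :
    -- `H^[𝒮(X,G)]` is a group:
    (∀ p q r : Σ _g : G, X → H,
      lrActMul act H (lrActMul act H p q) r = lrActMul act H p (lrActMul act H q r)) ∧
    (∃ e : Σ _g : G, X → H,
      (∀ p, lrActMul act H e p = p ∧ lrActMul act H p e = p) ∧
      (∀ p, ∃ q, lrActMul act H p q = e ∧ lrActMul act H q p = e)) ∧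
    -- and it is isomorphic to the wreath product `H ≀ (X,G)`:
    (∃ φ : (Σ _g : G, X → H) ≃ (X → H) × G,
      ∀ p q, φ (lrActMul act H p q) = wrMul act H (φ p) (φ q)) := by
  refine ⟨?_, ⟨⟨1, fun _ => 1⟩, ?_, ?_⟩, ⟨⟨fun p => (p.2, p.1), fun p => ⟨p.2, p.1⟩,
      fun p => rfl, fun p => rfl⟩, fun p q => rfl⟩⟩
  · intro p q r
    simp only [lrActMul, id, mul_assoc, h2]
  · intro p
    constructor <;> simp only [lrActMul, id, one_mul, mul_one, h1]
  · intro p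
    refine ⟨⟨p.1⁻¹, fun i => (p.2 (act i p.1⁻¹))⁻¹⟩, ?_, ?_⟩ <;>
      simp only [lrActMul, id, mul_inv_cancel, inv_mul_cancel, h2, h1, mul_inv_cancel]
end
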